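/- arXiv:2301.12653 — 3 statements merged into one kernel-verified Lean document; each statement's English description precedes it below -/
import Mathlib

section
/- In the Partition-reduction instance, every AEF allocation (A_1, A_2) allocates the two largest items g^s_k and g^l_k to different agents: exactly one of g^s_k, g^l_k lies in A_1 and the other lies in A_2. -/
/-!
If one bundle held both items of index `k`, its average value would be at least
`2M^k / 2k = M^k / k`, where `M = T²k²`. Every other item is worth at most `M^(k-1) + 2T`,
so the average of the other bundle is at most that, and `k (M^(k-1) + 2T) < M^k` because
`M` is much larger than both `k` and `T`. Hence an AEF allocation must split the two items.
-/

open Finset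

/-- Average value of a bundle: total value divided by cardinality; `0` for the empty bundle. -/
noncomputable def avgVal {G : Type*} (v : G → ℝ) (S : Finset G) : ℝ :=
  (∑ g ∈ S, v g) / (S.card : ℝ)

/-- The identical valuation of the Partition-reduction instance over the `2k` items,
encoded as pairs `(j, b) : Fin k × Bool`: the item `gˢ_{j+1}` is `(j, false)` with value
`(T²k²)^(j+1)`, and the item `gˡ_{j+1}` is `(j, true)` with value `(T²k²)^(j+1) + x_{j+1}`. -/
noncomputable def pv (k T : ℕ) (x : Fin k → ℕ) (p : Fin k × Bool) : ℝ :=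
  ((T ^ 2 * k ^ 2 : ℕ) : ℝ) ^ ((p.1 : ℕ) + 1) + (if p.2 then (x p.1 : ℝ) else 0)

section avgVal

variable {G : Type*} {v : G → ℝ}

theorem avgVal_le_of_forall_le {S : Finset G} {c : ℝ} (hc : 0 ≤ c) (h : ∀ g ∈ S, v g ≤ c) :
    avgVal v S ≤ c := by
  rcases S.eq_empty_or_nonempty with rfl | hS
  · simpa [avgVal] using hc
  · rw [avgVal, div_le_iff₀ (by exact_mod_cast hS.card_pos), mul_comm, ← nsmul_eq_mul]
    exact sum_le_card_nsmul S v c h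

theorem sum_div_card_le_avgVal [Fintype G] (hv : ∀ g, 0 ≤ v g) {B S : Finset G} (hBS : B ⊆ S) :
    (∑ g ∈ B, v g) / Fintype.card G ≤ avgVal v S := by
  rcases S.eq_empty_or_nonempty with rfl | hS
  · simp [subset_empty.mp hBS, avgVal]
  · exact div_le_div₀ (sum_nonneg fun g _ => hv g)
      (sum_le_sum_of_subset_of_nonneg hBS fun g _ _ => hv g)
      (by exact_mod_cast hS.card_pos) (by exact_mod_cast card_le_univ S)

end avgVal

section pv

variable {k T : ℕ} {x : Fin k → ℕ}

theorem pv_nonneg (p : Fin k × Bool) : 0 ≤ pv k T x p := by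
  unfold pv
  split_ifs <;> positivity

theorem pv_le_of_fst_lt (hT : 1 ≤ T) (hsum : ∑ j, x j = 2 * T) {j : Fin k}
    {p : Fin k × Bool} (hp : p.1 < j) :
    pv k T x p ≤ ((T ^ 2 * k ^ 2 : ℕ) : ℝ) ^ (j : ℕ) + 2 * T := by
  have hk : 1 ≤ k := Fin.pos j
  have hM : (1 : ℝ) ≤ ((T ^ 2 * k ^ 2 : ℕ) : ℝ) := by
    exact_mod_cast Nat.one_le_iff_ne_zero.mpr (by positivity)
  have hx : (x p.1 : ℝ) ≤ 2 * T := by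
    exact_mod_cast hsum ▸ single_le_sum (fun i _ => Nat.zero_le (x i)) (mem_univ p.1)
  have hlt : (p.1 : ℕ) + 1 ≤ j := hp
  have hpow := pow_le_pow_right₀ hM hlt
  unfold pv
  split_ifs <;> linarith

theorem pv_pair_eq (j : Fin k) (hj : (j : ℕ) + 1 = k) :
    pv k T x (j, false) + pv k T x (j, true) = 2 * ((T ^ 2 * k ^ 2 : ℕ) : ℝ) ^ k + x j := by
  simp only [pv, hj, if_true, Bool.false_eq_true, if_false]
  ring

end pv

theorem mul_pow_add_lt_pow_succ {k T j : ℕ} (hk : 2 ≤ k) (hT : 2 ≤ T) (hj : 1 ≤ j) :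
    (k : ℝ) * (((T ^ 2 * k ^ 2 : ℕ) : ℝ) ^ j + 2 * T) < ((T ^ 2 * k ^ 2 : ℕ) : ℝ) ^ (j + 1) := by
  set M : ℝ := ((T ^ 2 * k ^ 2 : ℕ) : ℝ) with hM
  have hk' : (2 : ℝ) ≤ k := by exact_mod_cast hk
  have hT' : (2 : ℝ) ≤ T := by exact_mod_cast hT
  have hTM : (T : ℝ) ≤ M := by
    rw [hM]; push_cast; nlinarith [mul_le_mul hT' hk' (by norm_num) (by linarith)]
  have h3k : 3 * (k : ℝ) < M := by
    rw [hM]; push_cast; nlinarith [mul_le_mul hT' hT' (by norm_num) (by linarith)]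
  have hMj : M ≤ M ^ j := le_self_pow₀ (by linarith) (by omega)
  calc (k : ℝ) * (M ^ j + 2 * T) ≤ 3 * k * M ^ j := by nlinarith
    _ < M * M ^ j := by gcongr
    _ = M ^ (j + 1) := by ring

theorem avgVal_lt_of_pair_mem {k T : ℕ} (hk : 2 ≤ k) (hT : 2 ≤ T) {x : Fin k → ℕ}
    (hsum : ∑ j, x j = 2 * T) {j : Fin k} (hj : (j : ℕ) + 1 = k) {A B : Finset (Fin k × Bool)}
    (hdisj : Disjoint A B) (hs : (j, false) ∈ A) (hl : (j, true) ∈ A) :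
    avgVal (pv k T x) B < avgVal (pv k T x) A := by
  have hB : avgVal (pv k T x) B ≤ ((T ^ 2 * k ^ 2 : ℕ) : ℝ) ^ (j : ℕ) + 2 * T := by
    refine avgVal_le_of_forall_le (by positivity) fun p hp => pv_le_of_fst_lt (by omega) hsum ?_
    have hpj : p.1 ≠ j := by
      obtain ⟨i, b⟩ := p
      rintro rfl
      cases b
      exacts [disjoint_left.mp hdisj hs hp, disjoint_left.mp hdisj hl hp]
    exact Fin.lt_def.mpr (by have := Fin.val_ne_of_ne hpj; omega)
  have hA := sum_div_card_le_avgVal (pv_nonneg (T := T) (x := x))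
    (insert_subset_iff.mpr ⟨hs, singleton_subset_iff.mpr hl⟩)
  rw [sum_pair (by simp), pv_pair_eq j hj] at hA
  simp only [Fintype.card_prod, Fintype.card_fin, Fintype.card_bool, Nat.cast_mul] at hA
  have key := mul_pow_add_lt_pow_succ hk hT (show 1 ≤ (j : ℕ) by omega)
  rw [hj] at key
  calc avgVal (pv k T x) B ≤ _ := hB
    _ < ((T ^ 2 * k ^ 2 : ℕ) : ℝ) ^ k / k := by
      rw [lt_div_iff₀ (by positivity)]; linarith
    _ ≤ (2 * ((T ^ 2 * k ^ 2 : ℕ) : ℝ) ^ k + x j) / (k * 2) := by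
      rw [div_le_div_iff₀ (by positivity) (by positivity)]; nlinarith [(x j).cast_nonneg (α := ℝ)]
    _ ≤ avgVal (pv k T x) A := by simpa using hA

/-- In the Partition-reduction instance, every AEF allocation splits the two largest
items `gˢ_k` and `gˡ_k` between the two agents. -/
theorem partition_reduction_largest_split (k T : ℕ) (hk : 4 ≤ k) (hT : 4 ≤ T)
    (x : Fin k → ℕ) (hsum : ∑ j, x j = 2 * T)
    (A1 A2 : Finset (Fin k × Bool))
    (hdisj : Disjoint A1 A2) (hcover : A1 ∪ A2 = Finset.univ)
    (hAEF : avgVal (pv k T x) A1 = avgVal (pv k T x) A2) :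
    (((⟨k - 1, by omega⟩ : Fin k), false) ∈ A1 ∧ ((⟨k - 1, by omega⟩ : Fin k), true) ∈ A2) ∨
    (((⟨k - 1, by omega⟩ : Fin k), false) ∈ A2 ∧ ((⟨k - 1, by omega⟩ : Fin k), true) ∈ A1) := by
  have hj : k - 1 + 1 = k := by omega
  have hmem (b : Bool) : ((⟨k - 1, by omega⟩ : Fin k), b) ∈ A1 ∪ A2 := hcover ▸ mem_univ _
  rcases mem_union.mp (hmem false) with hs | hs <;> rcases mem_union.mp (hmem true) with hl | hl
  · exact absurd hAEF.symm (avgVal_lt_of_pair_mem (by omega) (by omega) hsum hj hdisj hs hl).ne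
  · exact Or.inl ⟨hs, hl⟩
  · exact Or.inr ⟨hs, hl⟩
  · exact absurd hAEF (avgVal_lt_of_pair_mem (by omega) (by omega) hsum hj hdisj.symm hs hl).ne
end

section
/- If the Equal-cardinality-Partition-reduction instance admits an AEF-1 allocation in which each agent receives exactly k+2 items, then there exists Y ⊆ {1, …, 2k} with |Y| = k and Σ_{j∈Y} x_j = T (equivalently, the multiset {x_1, …, x_{2k}} admits an equal-cardinality equal-sum partition). -/
open Finset

/-- The item type of the Equal-cardinality-Partition-reduction instance:
`2k` items of `M₁`, `k+1` items of `M₂`, and five zero-valued items of `M₃`. -/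
abbrev ECP (k : ℕ) := Fin (2 * k) ⊕ (Fin (k + 1) ⊕ Fin 5)

/-- The identical valuation of the Equal-cardinality-Partition-reduction instance:
`v(g_j) = x_j + k²T²`, each item of `M₂` has value `(k+2)T'/(k+1)²` where
`T' = T + k³T²`, and the items of `M₃` have value `0`. -/
noncomputable def ecpVal (k T : ℕ) (x : Fin (2 * k) → ℕ) : ECP k → ℝ
  | Sum.inl j => (x j : ℝ) + (k : ℝ) ^ 2 * (T : ℝ) ^ 2
  | Sum.inr (Sum.inl _) =>
      ((k : ℝ) + 2) * ((T : ℝ) + (k : ℝ) ^ 3 * (T : ℝ) ^ 2) / ((k : ℝ) + 1) ^ 2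
  | Sum.inr (Sum.inr _) => 0

/-- The five zero-valued items of `M₃`, as a subset of all items. -/
def zeroItems (k : ℕ) : Finset (ECP k) :=
  Finset.univ.image (fun z : Fin 5 => Sum.inr (Sum.inr z))

/-- The `k+1` items of `M₂`, as a subset of all items. -/
def midItems (k : ℕ) : Finset (ECP k) :=
  Finset.univ.image (fun b : Fin (k + 1) => Sum.inr (Sum.inl b))

/-- `A` is an allocation among three agents: pairwise disjoint bundles covering all items. -/
def IsAlloc3 (k : ℕ) (A : Fin 3 → Finset (ECP k)) : Prop :=
  (∀ i j : Fin 3, i ≠ j → Disjoint (A i) (A j)) ∧ Finset.univ.biUnion A = Finset.univ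

/-- AEF-1 for three agents with the identical valuation `v`: for every pair of agents
there is an item in the union of the two bundles whose removal eliminates the envy. -/
def AEF1id (k : ℕ) (v : ECP k → ℝ) (A : Fin 3 → Finset (ECP k)) : Prop :=
  ∀ i h : Fin 3,
    ∃ g ∈ A i ∪ A h, avgVal v ((A h).erase g) ≤ avgVal v ((A i).erase g)

/-!
Let `P = k²T²` (`ecpBase`) and let `c = (k+2)T'/(k+1)²` (`ecpMid`) be the value of an item of
`M₂`, so that `(k+1)²c = (k+2)(T + kP)`. Every item of `M₁ ∪ M₂` is worth about `P`, and the
perturbations `x_j ≤ 2T` and `P - c` are of lower order. For bundles of equal size, AEF-1 bounds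
the excess of one bundle over another by one item value, so the numbers of nonzero items in the
three bundles, which sum to `3k+1`, are `k+1, k, k`. A small bundle can only be made envy-free
towards the big one by removing an item from itself, which gives
`(k+2)·v(small) ≥ (k+1)·v(big)`. This forces the big bundle to consist of the `k+1` items of `M₂`;
each small bundle then consists of `k` items of `M₁`, and the same inequality says that its
`x`-sum is at least `T`. As the `x_j` sum to `2T`, both `x`-sums equal `T`.
-/

theorem Fin.sum_univ_three_of_ne {M : Type*} [AddCommMonoid M] (f : Fin 3 → M) {p q r : Fin 3}
    (hpq : p ≠ q) (hpr : p ≠ r) (hqr : q ≠ r) : ∑ i, f i = f p + f q + f r := by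
  fin_cases p <;> fin_cases q <;> fin_cases r <;> simp_all [Fin.sum_univ_three] <;> abel

theorem sum_sum_eq_sum_of_biUnion_eq_univ {ι α M : Type*} [Fintype ι] [Fintype α] [DecidableEq α]
    [AddCommMonoid M] {A : ι → Finset α} (hd : ∀ i j, i ≠ j → Disjoint (A i) (A j))
    (hu : univ.biUnion A = univ) (f : α → M) : ∑ i, ∑ g ∈ A i, f g = ∑ g, f g := by
  rw [← sum_biUnion fun i _ j _ hij => hd i j hij, hu]

section AvgEnvy

variable {G : Type*} [DecidableEq G] {v : G → ℝ}

theorem avgVal_erase {S : Finset G} {g : G} {m : ℕ} (hS : #S = m + 1) (hg : g ∈ S) :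
    avgVal v (S.erase g) = (∑ a ∈ S, v a - v g) / m := by
  rw [avgVal, sum_erase_eq_sub hg, card_erase_of_mem hg, hS, Nat.add_sub_cancel]

/-- AEF-1 between two bundles of `n + 2` items, of values `V` (own) and `V'` (other), when the
removed item has value `w`; the averages are compared with denominators cleared. -/
def AvgEnvyFreeUpToOne (n w V V' : ℝ) : Prop :=
  (n + 1) * V' ≤ (n + 2) * (V - w) ∨ (n + 2) * (V' - w) ≤ (n + 1) * V

theorem avgEnvyFreeUpToOne_of_avgVal_erase_le {S S' : Finset G} {n : ℕ} (hS : #S = n + 2)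
    (hS' : #S' = n + 2) (hd : Disjoint S S') {g : G} (hg : g ∈ S ∪ S')
    (h : avgVal v (S'.erase g) ≤ avgVal v (S.erase g)) :
    AvgEnvyFreeUpToOne n (v g) (∑ a ∈ S, v a) (∑ a ∈ S', v a) := by
  rcases mem_union.1 hg with hg | hg
  · left
    rw [erase_eq_of_notMem (disjoint_left.1 hd hg), avgVal_erase hS hg, avgVal, hS',
      div_le_div_iff₀ (by positivity) (by positivity)] at h
    push_cast at h
    linarith
  · right
    rw [erase_eq_of_notMem (disjoint_right.1 hd hg), avgVal_erase hS' hg, avgVal, hS,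
      div_le_div_iff₀ (by positivity) (by positivity)] at h
    push_cast at h
    linarith

end AvgEnvy

namespace AvgEnvyFreeUpToOne

variable {n w V V' : ℝ}

theorem le_add {M : ℝ} (h : AvgEnvyFreeUpToOne n w V V') (hn : 0 ≤ n) (hV : 0 ≤ V)
    (hV' : V' ≤ (n + 2) * M) (hw0 : 0 ≤ w) (hwM : w ≤ M) : V' ≤ V + M := by
  rcases h with h | h <;> nlinarith

theorem mul_le (h : AvgEnvyFreeUpToOne n w V V') (hn : 0 ≤ n) (hw0 : 0 ≤ w)
    (hlt : (n + 1) * V < (n + 2) * (V' - w)) : (n + 1) * V' ≤ (n + 2) * V := by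
  rcases h with h | h
  · nlinarith
  · exact absurd h hlt.not_ge

end AvgEnvyFreeUpToOne

noncomputable def ecpBase (k T : ℕ) : ℝ := (k : ℝ) ^ 2 * (T : ℝ) ^ 2

noncomputable def ecpMid (k T : ℕ) : ℝ :=
  ((k : ℝ) + 2) * ((T : ℝ) + (k : ℝ) ^ 3 * (T : ℝ) ^ 2) / ((k : ℝ) + 1) ^ 2

/-- Every inequality about `ecpMid` below reduces, after clearing the denominator `(k+1)²` with
`succ_sq_mul`, to one of this shape: terms linear in `T` are dominated by `ecpBase k T = k²T²`. -/
theorem mul_lt_mul_ecpBase {k T : ℕ} (hT : 4 ≤ T) {α β : ℝ} (hβ : 0 ≤ β)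
    (h : α < 4 * k ^ 2 * β) : α * T < β * ecpBase k T := by
  have hT' : (4 : ℝ) ≤ T := by exact_mod_cast hT
  calc α * T < 4 * k ^ 2 * β * T := by gcongr
    _ ≤ T * k ^ 2 * β * T := by gcongr
    _ = β * ecpBase k T := by rw [ecpBase]; ring

namespace ecpMid

variable {k T : ℕ}

theorem succ_sq_mul (k T : ℕ) :
    ((k : ℝ) + 1) ^ 2 * ecpMid k T = (k + 2) * (T + k * ecpBase k T) := by
  rw [ecpMid, ecpBase]
  field_simp

theorem nonneg (k T : ℕ) : 0 ≤ ecpMid k T := by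
  unfold ecpMid
  positivity

theorem le_ecpBase (hk : 4 ≤ k) (hT : 4 ≤ T) : ecpMid k T ≤ ecpBase k T := by
  have hK : (4 : ℝ) ≤ k := by exact_mod_cast hk
  have key := mul_lt_mul_ecpBase (k := k) hT zero_le_one (α := k + 2) (by nlinarith)
  refine le_of_mul_le_mul_left ?_ (by positivity : (0 : ℝ) < (k + 1) ^ 2)
  linear_combination succ_sq_mul k T + key

theorem succ_mul_ecpBase_add_lt (hk : 4 ≤ k) (hT : 4 ≤ T) :
    (k + 1) * ecpBase k T + 4 * T < (k + 2) * ecpMid k T := by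
  have hK : (4 : ℝ) ≤ k := by exact_mod_cast hk
  have key := mul_lt_mul_ecpBase (k := k) hT (α := 3 * k ^ 2 + 4 * k) (β := k ^ 2 + k - 1)
    (by nlinarith) (by nlinarith)
  refine lt_of_mul_lt_mul_left ?_ (by positivity : (0 : ℝ) ≤ (k + 1) ^ 2)
  linear_combination -(k + 2 : ℝ) * succ_sq_mul k T + key

theorem succ_mul_lt (hk : 4 ≤ k) (hT : 4 ≤ T) :
    (k + 1) * (2 * T + k * ecpBase k T) <
      (k + 2) * ((k + 1) * ecpMid k T - (ecpBase k T + 2 * T)) := by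
  have hK : (4 : ℝ) ≤ k := by exact_mod_cast hk
  have key := mul_lt_mul_ecpBase (k := k) hT (α := 3 * k ^ 2 + 6 * k + 2) (β := k ^ 2 - 2)
    (by nlinarith) (by nlinarith [mul_le_mul hK hK (by norm_num) (by positivity)])
  refine lt_of_mul_lt_mul_left ?_ (by positivity : (0 : ℝ) ≤ k + 1)
  linear_combination -(k + 2 : ℝ) * succ_sq_mul k T + key

theorem add_mul_lt (hk : 4 ≤ k) (hT : 4 ≤ T) :
    (k + 2) * (2 * T + k * ecpBase k T) < (k + 1) * (ecpBase k T + k * ecpMid k T) := by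
  have hK : (4 : ℝ) ≤ k := by exact_mod_cast hk
  have key := mul_lt_mul_ecpBase (k := k) hT zero_le_one (α := (k + 2) ^ 2) (by nlinarith)
  refine lt_of_mul_lt_mul_left ?_ (by positivity : (0 : ℝ) ≤ k + 1)
  linear_combination -(k : ℝ) * succ_sq_mul k T + key

end ecpMid

section Instance

variable {k T : ℕ} {x : Fin (2 * k) → ℕ}

theorem sum_ecpVal (S : Finset (ECP k)) :
    ∑ g ∈ S, ecpVal k T x g =
      ∑ j ∈ S.toLeft, (x j : ℝ) + #S.toLeft * ecpBase k T + #S.toRight.toLeft * ecpMid k T := by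
  simp only [sum_sum_eq_sum_toLeft_add_sum_toRight, ecpVal, sum_add_distrib, sum_const,
    nsmul_eq_mul, mul_zero, add_zero]
  rfl

theorem ecpVal_nonneg (g : ECP k) : 0 ≤ ecpVal k T x g := by
  rcases g with j | b | z
  · exact add_nonneg (Nat.cast_nonneg _) (by positivity)
  · exact ecpMid.nonneg k T
  · exact le_rfl

theorem ecpVal_le (hk : 4 ≤ k) (hT : 4 ≤ T) (hsum : ∑ j, x j = 2 * T) (g : ECP k) :
    ecpVal k T x g ≤ ecpBase k T + 2 * T := by
  have hP : 0 ≤ ecpBase k T := by unfold ecpBase; positivity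
  rcases g with j | b | z
  · have hx : (x j : ℝ) ≤ 2 * T := by
      exact_mod_cast hsum ▸ single_le_sum (fun _ _ => Nat.zero_le _) (mem_univ j)
    change (x j : ℝ) + ecpBase k T ≤ _
    linarith
  · change ecpMid k T ≤ _
    linarith [ecpMid.le_ecpBase hk hT, (Nat.cast_nonneg T : (0 : ℝ) ≤ T)]
  · change (0 : ℝ) ≤ _
    positivity

/-- The numerical data of a balanced AEF-1 allocation of the instance: bundle `i` contains
`a i` items of `M₁`, whose `x`-values sum to `X i`, and `b i` items of `M₂`; its value is `V i`. -/
structure IsEcpProfile (k T : ℕ) (a b : Fin 3 → ℕ) (X V : Fin 3 → ℝ) : Prop where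
  value_eq : ∀ i, V i = X i + a i * ecpBase k T + b i * ecpMid k T
  share_nonneg : ∀ i, 0 ≤ X i
  sum_share : ∑ i, X i = 2 * T
  count_le : ∀ i, a i + b i ≤ k + 2
  sum_a : ∑ i, a i = 2 * k
  sum_b : ∑ i, b i = k + 1
  envyFree : ∀ i h, i ≠ h →
    ∃ w, 0 ≤ w ∧ w ≤ ecpBase k T + 2 * T ∧ AvgEnvyFreeUpToOne k w (V i) (V h)

theorem isEcpProfile_of_alloc (hk : 4 ≤ k) (hT : 4 ≤ T) (hsum : ∑ j, x j = 2 * T)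
    {A : Fin 3 → Finset (ECP k)} (hA : IsAlloc3 k A) (haef : AEF1id k (ecpVal k T x) A)
    (hcard : ∀ i, #(A i) = k + 2) :
    IsEcpProfile k T (fun i => #(A i).toLeft) (fun i => #(A i).toRight.toLeft)
      (fun i => ∑ j ∈ (A i).toLeft, (x j : ℝ)) (fun i => ∑ g ∈ A i, ecpVal k T x g) where
  value_eq i := sum_ecpVal (A i)
  share_nonneg i := sum_nonneg fun _ _ => Nat.cast_nonneg _
  sum_share := by
    have h := sum_sum_eq_sum_of_biUnion_eq_univ hA.1 hA.2 (Sum.elim (fun j => (x j : ℝ)) 0)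
    simp only [sum_sum_eq_sum_toLeft_add_sum_toRight, Sum.elim_inl, Sum.elim_inr,
      Pi.zero_apply, sum_const_zero, add_zero, toLeft_univ] at h
    rw [h]
    exact_mod_cast hsum
  count_le i := by
    have := card_toLeft_add_card_toRight (u := A i)
    have := card_toLeft_le (u := (A i).toRight)
    have := hcard i
    omega
  sum_a := by
    have h := sum_sum_eq_sum_of_biUnion_eq_univ hA.1 hA.2 (Sum.elim (fun _ => (1 : ℕ)) 0)
    simpa [sum_sum_eq_sum_toLeft_add_sum_toRight] using h
  sum_b := by
    have h := sum_sum_eq_sum_of_biUnion_eq_univ hA.1 hA.2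
      (Sum.elim 0 (Sum.elim (fun _ => (1 : ℕ)) 0))
    simpa [sum_sum_eq_sum_toLeft_add_sum_toRight] using h
  envyFree i h hih := by
    obtain ⟨g, hg, hle⟩ := haef i h
    exact ⟨_, ecpVal_nonneg g, ecpVal_le hk hT hsum g,
      avgEnvyFreeUpToOne_of_avgVal_erase_le (hcard i) (hcard h) (hA.1 i h hih) hg hle⟩

end Instance

namespace IsEcpProfile

variable {k T : ℕ} {a b : Fin 3 → ℕ} {X V : Fin 3 → ℝ}

theorem share_le (hπ : IsEcpProfile k T a b X V) (i : Fin 3) : X i ≤ 2 * T :=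
  hπ.sum_share ▸ single_le_sum (fun j _ => hπ.share_nonneg j) (mem_univ i)

theorem count_mul_ecpMid_le (hπ : IsEcpProfile k T a b X V) (hk : 4 ≤ k) (hT : 4 ≤ T)
    (i : Fin 3) : ((a i : ℝ) + b i) * ecpMid k T ≤ V i := by
  rw [hπ.value_eq i]
  nlinarith [hπ.share_nonneg i, mul_nonneg (Nat.cast_nonneg (a i))
    (sub_nonneg.2 (ecpMid.le_ecpBase hk hT))]

theorem le_add_count_mul_ecpBase (hπ : IsEcpProfile k T a b X V) (hk : 4 ≤ k) (hT : 4 ≤ T)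
    (i : Fin 3) : V i ≤ 2 * T + ((a i : ℝ) + b i) * ecpBase k T := by
  rw [hπ.value_eq i]
  nlinarith [hπ.share_le i, mul_nonneg (Nat.cast_nonneg (b i))
    (sub_nonneg.2 (ecpMid.le_ecpBase hk hT))]

theorem count_le_count_add_one (hπ : IsEcpProfile k T a b X V) (hk : 4 ≤ k) (hT : 4 ≤ T)
    {i h : Fin 3} (hih : i ≠ h) : a h + b h ≤ a i + b i + 1 := by
  by_contra! hgap
  have hc0 := ecpMid.nonneg k T
  have hcP := ecpMid.le_ecpBase hk hT
  have hgapR : (a i : ℝ) + b i + 2 ≤ a h + b h := by exact_mod_cast hgap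
  have hhR : (a h : ℝ) + b h ≤ k + 2 := by exact_mod_cast hπ.count_le h
  obtain ⟨w, hw0, hwM, henvy⟩ := hπ.envyFree i h hih
  have hle : V h ≤ V i + (ecpBase k T + 2 * T) := by
    refine henvy.le_add (Nat.cast_nonneg k) ?_ ?_ hw0 hwM
    · exact le_trans (by positivity) (hπ.count_mul_ecpMid_le hk hT i)
    · nlinarith [hπ.le_add_count_mul_ecpBase hk hT h]
  have hlt : V i + (ecpBase k T + 2 * T) < V h := by
    nlinarith [hπ.count_mul_ecpMid_le hk hT h, hπ.le_add_count_mul_ecpBase hk hT i,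
      ecpMid.succ_mul_ecpBase_add_lt hk hT, mul_le_mul_of_nonneg_right hgapR hc0,
      mul_nonneg (by linarith : (0 : ℝ) ≤ k - (a i + b i)) (sub_nonneg.2 hcP)]
  exact hle.not_gt hlt

theorem succ_mul_le_of_count (hπ : IsEcpProfile k T a b X V) (hk : 4 ≤ k) (hT : 4 ≤ T)
    {p s : Fin 3} (hsp : s ≠ p) (hp : a p + b p = k + 1) (hs : a s + b s = k) :
    (k + 1) * V p ≤ (k + 2) * V s := by
  have hpR : (a p : ℝ) + b p = k + 1 := by exact_mod_cast hp
  have hsR : (a s : ℝ) + b s = k := by exact_mod_cast hs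
  obtain ⟨w, hw0, hwM, henvy⟩ := hπ.envyFree s p hsp
  refine henvy.mul_le (Nat.cast_nonneg k) hw0 ?_
  calc (k + 1) * V s ≤ (k + 1) * (2 * T + k * ecpBase k T) := by
        gcongr; simpa [hsR] using hπ.le_add_count_mul_ecpBase hk hT s
    _ < (k + 2) * ((k + 1) * ecpMid k T - (ecpBase k T + 2 * T)) := ecpMid.succ_mul_lt hk hT
    _ ≤ (k + 2) * (V p - w) := by
        gcongr; simpa [hpR] using hπ.count_mul_ecpMid_le hk hT p

theorem mid_count_eq_of_counts (hπ : IsEcpProfile k T a b X V) (hk : 4 ≤ k) (hT : 4 ≤ T)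
    {p q : Fin 3} (hpq : p ≠ q) (hp : a p + b p = k + 1) (hq : a q + b q = k) :
    b p = k + 1 := by
  by_contra hne
  have hbpR : (b p : ℝ) ≤ k := by exact_mod_cast (by omega : b p ≤ k)
  have hapR : (a p : ℝ) = k + 1 - b p := by
    rw [eq_sub_iff_add_eq]; exact_mod_cast hp
  have hqR : (a q : ℝ) + b q = k := by exact_mod_cast hq
  have hVp : ecpBase k T + k * ecpMid k T ≤ V p := by
    rw [hπ.value_eq p, hapR]
    nlinarith [hπ.share_nonneg p,
      mul_nonneg (sub_nonneg.2 hbpR) (sub_nonneg.2 (ecpMid.le_ecpBase hk hT))]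
  have := calc (k + 1) * (ecpBase k T + k * ecpMid k T) ≤ (k + 1) * V p := by gcongr
    _ ≤ (k + 2) * V q := hπ.succ_mul_le_of_count hk hT hpq.symm hp hq
    _ ≤ (k + 2) * (2 * T + k * ecpBase k T) := by
      gcongr; simpa [hqR] using hπ.le_add_count_mul_ecpBase hk hT q
  exact this.not_gt (ecpMid.add_mul_lt hk hT)

theorem le_share_of_counts (hπ : IsEcpProfile k T a b X V) (hk : 4 ≤ k) (hT : 4 ≤ T)
    {p s : Fin 3} (hsp : s ≠ p) (hap : a p = 0) (hbp : b p = k + 1) (has : a s = k)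
    (hbs : b s = 0) : (T : ℝ) ≤ X s := by
  have hVp : (k + 1) * ecpMid k T ≤ V p := by
    rw [hπ.value_eq p, hap, hbp]; push_cast; linarith [hπ.share_nonneg p]
  have hVs : V s = X s + k * ecpBase k T := by
    rw [hπ.value_eq s, has, hbs]; simp
  have := calc (k + 1) * ((k + 1) * ecpMid k T) ≤ (k + 1) * V p := by gcongr
    _ ≤ (k + 2) * V s := hπ.succ_mul_le_of_count hk hT hsp (by omega) (by omega)
  nlinarith [ecpMid.succ_sq_mul k T]

theorem share_eq_of_counts (hπ : IsEcpProfile k T a b X V) (hk : 4 ≤ k) (hT : 4 ≤ T)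
    {p q r : Fin 3} (hpq : p ≠ q) (hpr : p ≠ r) (hqr : q ≠ r)
    (hp : a p + b p = k + 1) (hq : a q + b q = k) (hr : a r + b r = k) :
    a q = k ∧ X q = T := by
  have hbp := hπ.mid_count_eq_of_counts hk hT hpq hp hq
  have hb := hπ.sum_b
  have hX := hπ.sum_share
  rw [Fin.sum_univ_three_of_ne b hpq hpr hqr] at hb
  rw [Fin.sum_univ_three_of_ne X hpq hpr hqr] at hX
  have hXq := hπ.le_share_of_counts hk hT hpq.symm (by omega) hbp (by omega) (by omega)
  have hXr := hπ.le_share_of_counts hk hT hpr.symm (by omega) hbp (by omega) (by omega)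
  exact ⟨by omega, by linarith [hπ.share_nonneg p]⟩

theorem exists_share_eq (hπ : IsEcpProfile k T a b X V) (hk : 4 ≤ k) (hT : 4 ≤ T) :
    ∃ i, a i = k ∧ X i = T := by
  have hbal (i h : Fin 3) (hih : i ≠ h) := hπ.count_le_count_add_one hk hT hih
  have := hbal 0 1 (by decide)
  have := hbal 1 0 (by decide)
  have := hbal 0 2 (by decide)
  have := hbal 2 0 (by decide)
  have := hbal 1 2 (by decide)
  have := hbal 2 1 (by decide)
  have ha := hπ.sum_a
  have hb := hπ.sum_b
  rw [Fin.sum_univ_three] at ha hb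
  obtain h0 | h1 | h2 : a 0 + b 0 = k + 1 ∨ a 1 + b 1 = k + 1 ∨ a 2 + b 2 = k + 1 := by omega
  · exact ⟨1, hπ.share_eq_of_counts hk hT (r := 2) (by decide) (by decide) (by decide) h0
      (by omega) (by omega)⟩
  · exact ⟨0, hπ.share_eq_of_counts hk hT (r := 2) (by decide) (by decide) (by decide) h1
      (by omega) (by omega)⟩
  · exact ⟨0, hπ.share_eq_of_counts hk hT (r := 1) (by decide) (by decide) (by decide) h2
      (by omega) (by omega)⟩

end IsEcpProfile

/-- If the Equal-cardinality-Partition-reduction instance admits an AEF-1 allocation in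
which every agent receives exactly `k+2` items, then the multiset `{x_1, …, x_{2k}}`
admits an equal-cardinality equal-sum partition. -/
theorem ecp_backward (k T : ℕ) (hk : 4 ≤ k) (hT : 4 ≤ T)
    (x : Fin (2 * k) → ℕ) (hsum : ∑ j, x j = 2 * T)
    (hex : ∃ A : Fin 3 → Finset (ECP k),
      IsAlloc3 k A ∧ AEF1id k (ecpVal k T x) A ∧ ∀ i, (A i).card = k + 2) :
    ∃ Y : Finset (Fin (2 * k)), Y.card = k ∧ ∑ j ∈ Y, x j = T := by
  obtain ⟨A, hA, haef, hcard⟩ := hex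
  obtain ⟨i, hi, hXi⟩ :=
    (isEcpProfile_of_alloc hk hT hsum hA haef hcard).exists_share_eq hk hT
  exact ⟨(A i).toLeft, hi, by exact_mod_cast hXi⟩
end

section
/- Let A be an allocation of M among n agents, let i be an agent, let ε > 0, and fix a removal choice for i such that for every agent h ≠ i: if an item g_{i,h} is chosen, then u_i(A_i \ {g_{i,h}}) ≥ u_i(A_h \ {g_{i,h}}) − ε, and if no item is chosen, then u_i(A_i) ≥ u_i(A_h) − ε. Let S_i be the set of chosen items and M'_i = M \ S_i. Then u_i(A_i) ≥ (1/n)·u_i(M'_i) − ε. -/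
open Finset

/-- `A` is an allocation of the item set `M` among `n` agents: the bundles are pairwise
disjoint and their union is `M`. -/
def IsAllocation {G : Type*} [DecidableEq G] (M : Finset G) {n : ℕ}
    (A : Fin n → Finset G) : Prop :=
  (∀ i j : Fin n, i ≠ j → Disjoint (A i) (A j)) ∧ Finset.univ.biUnion A = M

/-- Average envy-freeness: every agent weakly prefers (on average) their own bundle. -/
def AEF {G : Type*} {n : ℕ} (v : Fin n → G → ℝ) (A : Fin n → Finset G) : Prop :=
  ∀ i h : Fin n, avgVal (v i) (A h) ≤ avgVal (v i) (A i)

/-- Average envy-freeness up to one item. -/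
def AEF1 {G : Type*} [DecidableEq G] {n : ℕ} (v : Fin n → G → ℝ)
    (A : Fin n → Finset G) : Prop :=
  ∀ i h : Fin n, (A i ∪ A h).Nonempty →
    ∃ g ∈ A i ∪ A h, avgVal (v i) ((A h).erase g) ≤ avgVal (v i) ((A i).erase g)

/-
Let `α = u_i(A_i)`. Every piece `A_h \ S_i` of `M'_i` has average value at most `n (α + ε)`:
for `h ≠ i` the piece is `A_h` or `A_h \ {g_{i,h}}`, whose average is at most
`u_i(A_i \ {g_{i,h}}) + ε ≤ 2α + ε`, and removing the at most `n - 1` chosen items from `A_i`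
shrinks its size at most `n`-fold, so `u_i(A_i \ S_i) ≤ n α`. Averages of disjoint pieces
bounded by a common constant bound the average of their union.
-/

section AverageValue

variable {G : Type*} (v : G → ℝ)

lemma avgVal_nonneg (hv : ∀ g, 0 ≤ v g) (S : Finset G) : 0 ≤ avgVal v S :=
  div_nonneg (Finset.sum_nonneg fun g _ => hv g) (Nat.cast_nonneg _)

lemma sum_le_mul_card_of_avgVal_le {S : Finset G} {B : ℝ} (h : avgVal v S ≤ B) :
    ∑ g ∈ S, v g ≤ B * S.card := by
  rcases S.eq_empty_or_nonempty with rfl | hS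
  · simp
  · rwa [avgVal, div_le_iff₀ (by exact_mod_cast hS.card_pos)] at h

lemma avgVal_le_of_sum_le_mul_card {S : Finset G} {B : ℝ} (hB : 0 ≤ B)
    (h : ∑ g ∈ S, v g ≤ B * S.card) : avgVal v S ≤ B := by
  rcases S.eq_empty_or_nonempty with rfl | hS
  · simpa [avgVal] using hB
  · rwa [avgVal, div_le_iff₀ (by exact_mod_cast hS.card_pos)]

lemma avgVal_biUnion_le [DecidableEq G] {ι : Type*} {s : Finset ι} {A : ι → Finset G}
    (hA : (s : Set ι).PairwiseDisjoint A) {B : ℝ} (hB : 0 ≤ B)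
    (h : ∀ j ∈ s, avgVal v (A j) ≤ B) : avgVal v (s.biUnion A) ≤ B := by
  refine avgVal_le_of_sum_le_mul_card v hB ?_
  rw [Finset.sum_biUnion hA, Finset.card_biUnion hA, Nat.cast_sum, Finset.mul_sum]
  exact Finset.sum_le_sum fun j hj => sum_le_mul_card_of_avgVal_le v (h j hj)

lemma avgVal_sdiff_le [DecidableEq G] (hv : ∀ g, 0 ≤ v g) (Q T : Finset G) :
    avgVal v (Q \ T) ≤ (T.card + 1) * avgVal v Q := by
  rcases (Q \ T).eq_empty_or_nonempty with hQT | hQT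
  · rw [hQT, avgVal, Finset.sum_empty, zero_div]
    exact mul_nonneg (by positivity) (avgVal_nonneg v hv Q)
  have hcard : (Q.card : ℝ) ≤ (T.card + 1) * (Q \ T).card := by
    have h1 : 1 ≤ (Q \ T).card := hQT.card_pos
    have h2 : Q.card ≤ (Q \ T).card + T.card := Finset.card_le_card_sdiff_add_card
    have : (Q.card : ℝ) ≤ (Q \ T).card + T.card := by exact_mod_cast h2
    have : (1 : ℝ) ≤ (Q \ T).card := by exact_mod_cast h1
    nlinarith [(T.card.cast_nonneg : (0 : ℝ) ≤ T.card)]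
  have hsum : ∑ g ∈ Q \ T, v g ≤ ∑ g ∈ Q, v g :=
    Finset.sum_le_sum_of_subset_of_nonneg Finset.sdiff_subset fun g _ _ => hv g
  have hQ : (0 : ℝ) < Q.card := by exact_mod_cast (hQT.mono Finset.sdiff_subset).card_pos
  rw [avgVal, avgVal, ← mul_div_assoc, div_le_div_iff₀ (by exact_mod_cast hQT.card_pos) hQ]
  calc (∑ g ∈ Q \ T, v g) * Q.card
      ≤ (∑ g ∈ Q, v g) * ((T.card + 1) * (Q \ T).card) :=
        mul_le_mul hsum hcard (Nat.cast_nonneg _) (Finset.sum_nonneg fun g _ => hv g)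
    _ = (T.card + 1) * (∑ g ∈ Q, v g) * (Q \ T).card := by ring

end AverageValue

section RemovalChoice

variable {ι G : Type*} [DecidableEq G]

lemma card_le_of_mem_iff_exists_eq_some {s : Finset ι} {c : ι → Option G} {S : Finset G}
    (hS : ∀ g, g ∈ S ↔ ∃ h ∈ s, c h = some g) : S.card ≤ s.card := by
  classical
  calc S.card = (S.map Function.Embedding.some).card := (Finset.card_map _).symm
    _ ≤ (s.image c).card := Finset.card_le_card fun x hx => by
        obtain ⟨g, hg, rfl⟩ := Finset.mem_map.mp hx
        obtain ⟨h, hs, hc⟩ := (hS g).mp hg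
        exact Finset.mem_image.mpr ⟨h, hs, hc⟩
    _ ≤ s.card := Finset.card_image_le

lemma card_add_one_le_of_mem_iff {n : ℕ} {i : Fin n} {c : Fin n → Option G} {S : Finset G}
    (hS : ∀ g, g ∈ S ↔ ∃ h, h ≠ i ∧ c h = some g) : S.card + 1 ≤ n := by
  have hle : S.card ≤ (Finset.univ.erase i).card :=
    card_le_of_mem_iff_exists_eq_some (by simpa using hS)
  rw [Finset.card_erase_of_mem (Finset.mem_univ i), Finset.card_univ, Fintype.card_fin] at hle
  have hpos := i.pos
  omega

/-- Among the chosen items, `A h` contains only the one chosen for `h`: any item chosen for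
another agent `h'` lies in `A i ∪ A h'`, which is disjoint from `A h`. -/
lemma sdiff_eq_sdiff_toFinset {A : ι → Finset G}
    (hdisj : ∀ j k, j ≠ k → Disjoint (A j) (A k)) {i : ι} {c : ι → Option G}
    (hc : ∀ h, h ≠ i → ∀ g, c h = some g → g ∈ A i ∪ A h) {S : Finset G}
    (hS : ∀ g, g ∈ S ↔ ∃ h, h ≠ i ∧ c h = some g) {h : ι} (hhi : h ≠ i) :
    A h \ S = A h \ (c h).toFinset := by
  ext g
  simp only [Finset.mem_sdiff, Option.mem_toFinset, Option.mem_def, hS, and_congr_right_iff]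
  intro hg
  refine not_congr ⟨fun ⟨h', hh'i, hh'⟩ => ?_, fun hh => ⟨h, hhi, hh⟩⟩
  obtain rfl : h' = h := by
    by_contra hne
    rcases Finset.mem_union.mp (hc h' hh'i g hh') with hgi | hgh'
    · exact Finset.disjoint_left.mp (hdisj i h (Ne.symm hhi)) hgi hg
    · exact Finset.disjoint_left.mp (hdisj h' h hne) hgh' hg
  exact hh'

end RemovalChoice

lemma avgVal_sdiff_toFinset_le {G : Type*} [DecidableEq G] {v : G → ℝ} (hv : ∀ g, 0 ≤ v g)
    {P Q : Finset G} {ε : ℝ} {c : Option G}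
    (hsome : ∀ g, c = some g → avgVal v (P.erase g) - ε ≤ avgVal v (Q.erase g))
    (hnone : c = none → avgVal v P - ε ≤ avgVal v Q) :
    avgVal v (P \ c.toFinset) ≤ 2 * avgVal v Q + ε := by
  cases c with
  | none =>
    have := hnone rfl
    have := avgVal_nonneg v hv Q
    rw [Option.toFinset_none, Finset.sdiff_empty]
    linarith
  | some g =>
    have h1 := hsome g rfl
    have h2 := avgVal_sdiff_le v hv Q {g}
    rw [Finset.card_singleton, Finset.sdiff_singleton_eq_erase] at h2
    rw [Option.toFinset_some, Finset.sdiff_singleton_eq_erase]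
    push_cast at h2
    linarith

/-- If agent `i`'s envy towards every other agent is at most `ε` (after removing the item
chosen by `i`'s removal choice, if any), then the average value of `i`'s bundle is at
least `(1/n)·u_i(M \ S_i) - ε`, where `S_i` is the set of chosen items. -/
theorem bounded_envy_lower_bound {G : Type*} [DecidableEq G] (M : Finset G) (n : ℕ)
    (v : Fin n → G → ℝ) (hv : ∀ i g, 0 ≤ v i g)
    (A : Fin n → Finset G) (hA : IsAllocation M A)
    (i : Fin n) (ε : ℝ) (hε : 0 < ε)
    (rc : Fin n → Option G)
    (hrc : ∀ h : Fin n, h ≠ i →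
      (∀ g : G, rc h = some g → g ∈ A i ∪ A h ∧
        avgVal (v i) ((A h).erase g) - ε ≤ avgVal (v i) ((A i).erase g)) ∧
      (rc h = none → avgVal (v i) (A h) - ε ≤ avgVal (v i) (A i)))
    (S : Finset G) (hS : ∀ g : G, g ∈ S ↔ ∃ h : Fin n, h ≠ i ∧ rc h = some g) :
    (1 / (n : ℝ)) * avgVal (v i) (M \ S) - ε ≤ avgVal (v i) (A i) := by
  obtain ⟨hdisj, rfl⟩ := hA
  set α := avgVal (v i) (A i)
  have hα : 0 ≤ α := avgVal_nonneg _ (hv i) _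
  have hn : (0 : ℝ) < n := by exact_mod_cast i.pos
  have hS_card : (S.card : ℝ) + 1 ≤ n := by exact_mod_cast card_add_one_le_of_mem_iff hS
  have hpart : ∀ h ∈ Finset.univ, avgVal (v i) (A h \ S) ≤ n * (α + ε) := by
    intro h _
    by_cases hhi : h = i
    · subst hhi
      calc avgVal (v h) (A h \ S) ≤ (S.card + 1) * α := avgVal_sdiff_le _ (hv h) _ _
        _ ≤ n * (α + ε) := by nlinarith
    · have hn2 : (2 : ℝ) ≤ n := by
        exact_mod_cast Fin.nontrivial_iff_two_le.mp (nontrivial_of_ne h i hhi)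
      rw [sdiff_eq_sdiff_toFinset hdisj (fun h hh g hg => ((hrc h hh).1 g hg).1) hS hhi]
      calc _ ≤ 2 * α + ε := avgVal_sdiff_toFinset_le (hv i)
              (fun g hg => ((hrc h hhi).1 g hg).2) (hrc h hhi).2
        _ ≤ n * (α + ε) := by nlinarith
  have hunion : Finset.univ.biUnion A \ S = Finset.univ.biUnion (fun h => A h \ S) := by
    ext; simp
  have hM : avgVal (v i) (Finset.univ.biUnion A \ S) ≤ n * (α + ε) := hunion ▸
    avgVal_biUnion_le (v i) (fun j _ k _ hjk => (hdisj j k hjk).mono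
      Finset.sdiff_subset Finset.sdiff_subset) (by positivity) hpart
  calc (1 / (n : ℝ)) * avgVal (v i) (Finset.univ.biUnion A \ S) - ε
      ≤ 1 / n * (n * (α + ε)) - ε := by gcongr
    _ = α := by field_simp; ring
end
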